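/- For any elements $x,y$ of a Coxeter group $W$, the set $\{z \in W : z \le_L x \text{ and } z \le y\}$ has a maximum element with respect to the Bruhat order, namely $(\psi^R_{y^{-1}}(x))^{-1} x$. -/

import Mathlib

/-!
Along a reduced word `ω` for `y⁻¹`, `ψ^R_ω` strips from `x` exactly the right descents it meets, so
`x = ψ^R_ω(x) · r` length-additively, where `r = (ψ^R_ω(x))⁻¹ x` is the product of a reduced
subword of `ω.reverse`, a reduced word for `y`. Hence `r ≤_L x` and, by the subword property,
`r ≤ y`. If `z ≤_L x`, every letter stripped from `z` is also stripped from `x`. If moreover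
`z ≤ y`, the lifting property shows that `ψ^R_ω` strips `z` down to `1`, so `z` is the product of a
subword of a reduced word for `r`, and `z ≤ r`.

The subword and lifting properties rest on the strong exchange condition.
-/

namespace PaperStmt

open scoped Classical

variable {B : Type*} {W : Type*} [Group W] {M : CoxeterMatrix B}

/-- Bruhat (strong) cover: `v = t * u` for a reflection `t`, with `ℓ v = ℓ u + 1`. -/
def BruhatCov (cs : CoxeterSystem M W) (u v : W) : Prop :=
  cs.length v = cs.length u + 1 ∧ ∃ t : W, cs.IsReflection t ∧ v = t * u

/-- The Bruhat (strong) order, generated by the covering relations. -/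
def BruhatLe (cs : CoxeterSystem M W) : W → W → Prop :=
  Relation.ReflTransGen (BruhatCov cs)

/-- Strict Bruhat order. -/
def BruhatLt (cs : CoxeterSystem M W) (u v : W) : Prop :=
  BruhatLe cs u v ∧ u ≠ v

/-- Left weak order: `u ≤_L v` iff `ℓ(v u⁻¹) + ℓ u = ℓ v`. -/
def leftLe (cs : CoxeterSystem M W) (u v : W) : Prop :=
  cs.length (v * u⁻¹) + cs.length u = cs.length v

/-- Right weak order: `u ≤_R v` iff `ℓ u + ℓ(u⁻¹ v) = ℓ v`. -/
def rightLe (cs : CoxeterSystem M W) (u v : W) : Prop :=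
  cs.length u + cs.length (u⁻¹ * v) = cs.length v

/-- Demazure action of a simple reflection: `φ_s(x) = s x` if `s x > x`, else `x`. -/
noncomputable def phi (cs : CoxeterSystem M W) (i : B) (x : W) : W :=
  if BruhatLt cs x (cs.simple i * x) then cs.simple i * x else x

/-- Anti-Demazure action: `ψ_s(x) = s x` if `s x < x`, else `x`. -/
noncomputable def psi (cs : CoxeterSystem M W) (i : B) (x : W) : W :=
  if BruhatLt cs (cs.simple i * x) x then cs.simple i * x else x

/-- Right anti-Demazure action: `ψ^R_s(x) = x s` if `x s < x`, else `x`. -/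
noncomputable def psiR (cs : CoxeterSystem M W) (i : B) (x : W) : W :=
  if BruhatLt cs (x * cs.simple i) x then x * cs.simple i else x

/-- `φ_w` along a word `w = s_1 ⋯ s_n`: `φ_{s_1} ∘ ⋯ ∘ φ_{s_n}`. -/
noncomputable def phiWord (cs : CoxeterSystem M W) (ω : List B) (x : W) : W :=
  ω.foldr (phi cs) x

/-- `ψ_w` along a word `w = s_1 ⋯ s_n`: `ψ_{s_1} ∘ ⋯ ∘ ψ_{s_n}`. -/
noncomputable def psiWord (cs : CoxeterSystem M W) (ω : List B) (x : W) : W :=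
  ω.foldr (psi cs) x

/-- `ψ^R_w` along a word `w = s_1 ⋯ s_n`: `ψ^R_{s_n} ∘ ⋯ ∘ ψ^R_{s_1}`. -/
noncomputable def psiRWord (cs : CoxeterSystem M W) (ω : List B) (x : W) : W :=
  ω.foldl (fun y i => psiR cs i y) x

open CoxeterSystem
open scoped List

section

variable (cs : CoxeterSystem M W)

local prefix:100 "s " => cs.simple
local prefix:100 "π " => cs.wordProd
local prefix:100 "ℓ " => cs.length
local prefix:100 "lis " => cs.leftInvSeq
local prefix:100 "ris " => cs.rightInvSeq

section SignRepresentation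

theorem leftInvSeq_append (α β : List B) :
    lis (α ++ β) = lis α ++ (lis β).map (MulAut.conj (π α)) := by
  induction α with
  | nil => simp
  | cons i α ih => simp [leftInvSeq, ih, wordProd_cons, List.map_map, Function.comp_def]

theorem map_conj_rightInvSeq (ω : List B) :
    (ris ω).map (MulAut.conj (π ω)) = lis ω := by
  induction ω with
  | nil => rfl
  | cons i ω ih =>
    simp only [rightInvSeq, leftInvSeq, List.map_cons, ← ih, List.map_map, wordProd_cons]
    refine congrArg₂ _ (by simp [mul_assoc]) (List.map_congr_left fun t _ => ?_)
    simp [mul_assoc]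

theorem odd_count_leftInvSeq_palindrome (δ : List B) (j : B) :
    Odd ((lis (δ ++ j :: δ.reverse)).count (MulAut.conj (π δ) (s j))) := by
  set t := MulAut.conj (π δ) (s j)
  have hconj : MulAut.conj (π δ) * MulAut.conj (s j) = MulAut.conj t * MulAut.conj (π δ) := by
    simp only [← map_mul, t, MulAut.conj_apply]
    group
  have hmap : (lis (j :: δ.reverse)).map (MulAut.conj (π δ)) =
      t :: ((lis δ).map (MulAut.conj t)).reverse := by
    rw [leftInvSeq, leftInvSeq_reverse, List.map_cons, List.map_map, ← MulAut.coe_mul, hconj,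
      MulAut.coe_mul, ← List.map_map, List.map_reverse, map_conj_rightInvSeq, List.map_reverse]
  have hcount := List.count_map_of_injective (lis δ) _ (MulAut.conj t).injective t
  rw [show MulAut.conj t t = t by simp] at hcount
  rw [leftInvSeq_append, hmap, List.count_append, List.count_cons_self, List.count_reverse,
    hcount]
  exact ⟨(lis δ).count t, by ring⟩

/-- The action of `s i` in Björner–Brenti's representation of `W` on `W × {±1}`; the
representation shows that the parity of the number of occurrences of `t` in `lis ω` depends only
on `π ω`. -/
noncomputable def signAction (i : B) : Function.End (W × ℤˣ) :=
  fun q => (MulAut.conj (s i) q.1, if q.1 = s i then -q.2 else q.2)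

theorem prod_map_signAction_apply (ω : List B) (t : W) (ε : ℤˣ) :
    (ω.map (signAction cs)).prod (t, ε) =
      (MulAut.conj (π ω) t, (-1) ^ (lis ω).count (MulAut.conj (π ω) t) * ε) := by
  induction ω generalizing t ε with
  | nil =>
    simp only [List.map_nil, List.prod_nil, wordProd_nil, map_one, MulAut.one_apply,
      leftInvSeq_nil, List.count_nil, pow_zero, one_mul]
    rfl
  | cons i ω ih =>
    have hx : MulAut.conj (π (i :: ω)) t = MulAut.conj (s i) (MulAut.conj (π ω) t) := by
      simp [wordProd_cons, mul_assoc]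
    rw [List.map_cons, List.prod_cons]
    change signAction cs i ((ω.map (signAction cs)).prod (t, ε)) = _
    rw [ih, hx]
    generalize MulAut.conj (π ω) t = x
    have hfix : s i = MulAut.conj (s i) x ↔ x = s i :=
      eq_comm.trans ((MulAut.conj (s i)).injective.eq_iff' (by simp))
    rw [leftInvSeq, List.count_cons, List.count_map_of_injective _ _ (MulAut.conj (s i)).injective]
    by_cases h : x = s i
    · simp [signAction, h, pow_succ]
    · rw [beq_eq_false_iff_ne.mpr (hfix.not.mpr h)]
      simp [signAction, h]

theorem prod_map_alternatingWord_two_mul {N : Type*} [Monoid N] (f : B → N) (i j : B) (m : ℕ) :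
    ((alternatingWord i j (2 * m)).map f).prod = (f i * f j) ^ m := by
  induction m with
  | zero => simp [alternatingWord]
  | succ m ih =>
    rw [show 2 * (m + 1) = 2 * m + 1 + 1 by ring, alternatingWord_succ', alternatingWord_succ']
    simp [ih, pow_succ', mul_assoc]

theorem even_count_leftInvSeq_braidWord (i j : B) (t : W) :
    Even ((lis (alternatingWord i j (2 * M i j))).count t) := by
  set L := lis (alternatingWord i j (2 * M i j))
  have hperiodic : L.drop (M i j) = L.take (M i j) := by
    refine List.ext_getElem (by simp [L]; omega) fun k h₁ h₂ => ?_
    simp only [L, length_leftInvSeq, length_alternatingWord, List.length_drop] at h₁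
    rw [List.getElem_drop, List.getElem_take,
      getElem_leftInvSeq_alternatingWord cs i j _ _ (by omega),
      getElem_leftInvSeq_alternatingWord cs i j _ _ (by omega), prod_alternatingWord_eq_mul_pow,
      prod_alternatingWord_eq_mul_pow]
    rw [show (2 * (M i j + k) + 1) / 2 = M i j + k by omega, show (2 * k + 1) / 2 = k by omega]
    simp [pow_add]
  rw [← List.take_append_drop (M i j) L, List.count_append, hperiodic]
  exact ⟨_, rfl⟩

theorem isLiftable_signAction : M.IsLiftable (signAction cs) := by
  intro i j
  have hπ : π (alternatingWord i j (2 * M i j)) = 1 := by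
    rw [wordProd, prod_map_alternatingWord_two_mul, cs.simple_mul_simple_pow]
  rw [← prod_map_alternatingWord_two_mul]
  funext ⟨t, ε⟩
  rw [prod_map_signAction_apply, hπ, (even_count_leftInvSeq_braidWord cs i j _).neg_one_pow]
  simp only [map_one, MulAut.one_apply, one_mul]
  rfl

noncomputable def signHom : W →* Function.End (W × ℤˣ) :=
  cs.lift ⟨signAction cs, isLiftable_signAction cs⟩

theorem signHom_wordProd (ω : List B) : signHom cs (π ω) = (ω.map (signAction cs)).prod := by
  rw [wordProd, map_list_prod, List.map_map]
  exact congrArg _ (List.map_congr_left fun i _ => cs.lift_apply_simple _ i)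

theorem neg_one_pow_count_leftInvSeq_eq {ω ω' : List B} (h : π ω = π ω') (t : W) :
    (-1 : ℤˣ) ^ (lis ω).count t = (-1) ^ (lis ω').count t := by
  have key (ω : List B) : signHom cs (π ω) ((π ω)⁻¹ * t * π ω, 1) =
      (t, (-1) ^ (lis ω).count t) := by
    rw [signHom_wordProd, prod_map_signAction_apply]
    simp [mul_assoc]
  exact congrArg Prod.snd ((key ω).symm.trans (h ▸ key ω'))

end SignRepresentation

section Exchange

theorem mem_leftInvSeq_of_isLeftInversion {ω : List B} {t : W}
    (ht : cs.IsLeftInversion (π ω) t) : t ∈ lis ω := by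
  -- With `t = π (δ ++ j :: δ.reverse)` and `t * π ω = π ρ`, `ρ` reduced, the word
  -- `δ ++ j :: δ.reverse ++ ρ` also represents `π ω`. If `t ∉ lis ω`, comparing parities, with `t`
  -- occurring an odd number of times in the palindromic part, gives `t ∈ lis ρ`, that is,
  -- `ℓ (π ω) < ℓ (t * π ω)`.
  obtain ⟨⟨v, j, rfl⟩, hlt⟩ := ht
  set t := v * s j * v⁻¹
  obtain ⟨δ, rfl⟩ := cs.wordProd_surjective v
  obtain ⟨ρ, hρ, hρω⟩ := cs.exists_isReduced (t * π ω)
  have hpal : π (δ ++ j :: δ.reverse) = t := by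
    simp [t, wordProd_append, wordProd_cons, wordProd_reverse, mul_assoc]
  have hsq : t * t = 1 := IsReflection.mul_self ⟨_, j, rfl⟩
  have hcount : (lis (δ ++ j :: δ.reverse ++ ρ)).count t =
      (lis (δ ++ j :: δ.reverse)).count t + (lis ρ).count t := by
    have := List.count_map_of_injective (lis ρ) _ (MulAut.conj t).injective t
    rw [show MulAut.conj t t = t by simp] at this
    rw [leftInvSeq_append, List.count_append, hpal, this]
  have hpal_odd := odd_count_leftInvSeq_palindrome cs δ j
  rw [MulAut.conj_apply] at hpal_odd
  by_contra hmem
  have hsign := neg_one_pow_count_leftInvSeq_eq cs (ω := δ ++ j :: δ.reverse ++ ρ) (ω' := ω)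
    (by rw [wordProd_append, hpal, ← hρω, ← mul_assoc, hsq, one_mul]) t
  rw [List.count_eq_zero.mpr hmem, pow_zero, hcount, neg_one_pow_eq_one_iff_even (by decide),
    Nat.even_add] at hsign
  have hρ_odd : Odd ((lis ρ).count t) :=
    Nat.not_even_iff_odd.mp fun he => Nat.not_even_iff_odd.mpr hpal_odd (hsign.mpr he)
  have hinv := (cs.isLeftInversion_of_mem_leftInvSeq hρ (List.count_pos_iff.mp hρ_odd.pos)).2
  rw [← hρω, ← mul_assoc, hsq, one_mul] at hinv
  exact lt_asymm hlt hinv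

theorem exists_sublist_of_isLeftInversion {ω : List B} {t : W}
    (ht : cs.IsLeftInversion (π ω) t) :
    ∃ τ, τ <+ ω ∧ τ.length + 1 = ω.length ∧ π τ = t * π ω := by
  obtain ⟨j, hj, rfl⟩ := List.getElem_of_mem (mem_leftInvSeq_of_isLeftInversion cs ht)
  rw [length_leftInvSeq] at hj
  refine ⟨ω.eraseIdx j, List.eraseIdx_sublist ω j, List.length_eraseIdx_add_one hj, ?_⟩
  rw [← cs.getD_leftInvSeq_mul_wordProd, List.getD_eq_getElem]

theorem exists_sublist_of_isRightDescent {ω : List B} {i : B}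
    (h : cs.IsRightDescent (π ω) i) :
    ∃ τ, τ <+ ω ∧ τ.length + 1 = ω.length ∧ π τ = π ω * s i := by
  have hinv : cs.IsLeftInversion (π ω.reverse) (s i) := by
    refine ⟨cs.isReflection_simple i, ?_⟩
    rw [wordProd_reverse, ← cs.inv_simple, ← mul_inv_rev, length_inv, length_inv]
    exact h
  obtain ⟨τ, hsub, hlen, hτ⟩ := exists_sublist_of_isLeftInversion cs hinv
  refine ⟨τ.reverse, by simpa using hsub.reverse, by simpa using hlen, ?_⟩
  rw [wordProd_reverse, hτ, wordProd_reverse, mul_inv_rev, inv_inv, inv_simple]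

theorem isReduced_cons_iff {i : B} {ρ : List B} :
    cs.IsReduced (i :: ρ) ↔ cs.IsReduced ρ ∧ ¬cs.IsLeftDescent (π ρ) i := by
  refine ⟨fun h => ⟨h.drop 1, fun hi => ?_⟩, fun ⟨hρ, hi⟩ => ?_⟩
  · have := h.eq
    have := cs.length_wordProd_le ρ
    rw [wordProd_cons, List.length_cons] at *
    exact absurd hi (by unfold IsLeftDescent; omega)
  · rw [CoxeterSystem.IsReduced, wordProd_cons, cs.not_isLeftDescent_iff.mp hi, hρ.eq,
      List.length_cons]

theorem isLeftDescent_wordProd_cons {i : B} {ρ : List B} (h : cs.IsReduced (i :: ρ)) :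
    cs.IsLeftDescent (π (i :: ρ)) i := by
  rw [isLeftDescent_iff_not_isLeftDescent_mul, wordProd_cons, simple_mul_simple_cancel_left]
  exact ((isReduced_cons_iff cs).mp h).2

theorem exists_isReduced_cons_of_isLeftDescent {w : W} {i : B} (h : cs.IsLeftDescent w i) :
    ∃ ρ, cs.IsReduced (i :: ρ) ∧ π (i :: ρ) = w := by
  obtain ⟨ρ, hρ, hρw⟩ := cs.exists_isReduced (s i * w)
  refine ⟨ρ, (isReduced_cons_iff cs).mpr ⟨hρ, ?_⟩, ?_⟩
  · rw [← hρw]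
    exact cs.isLeftDescent_iff_not_isLeftDescent_mul.mp h
  · rw [wordProd_cons, ← hρw, simple_mul_simple_cancel_left]

theorem sublist_of_sublist_cons_of_not_isLeftDescent {τ ρ : List B} {i : B}
    (hτ : cs.IsReduced τ) (hsub : τ <+ i :: ρ) (hi : ¬cs.IsLeftDescent (π τ) i) : τ <+ ρ := by
  cases hsub with
  | cons _ h => exact h
  | cons_cons _ h => exact absurd (isLeftDescent_wordProd_cons cs hτ) hi

end Exchange

section Bruhat

theorem bruhatCov_simple_mul {w : W} {i : B} (h : ¬cs.IsLeftDescent w i) :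
    BruhatCov cs w (s i * w) :=
  ⟨cs.not_isLeftDescent_iff.mp h, s i, cs.isReflection_simple i, rfl⟩

theorem bruhatCov_mul_simple {w : W} {i : B} (h : ¬cs.IsRightDescent w i) :
    BruhatCov cs w (w * s i) :=
  ⟨cs.not_isRightDescent_iff.mp h, w * s i * w⁻¹, ⟨w, i, rfl⟩, by group⟩

theorem bruhatCov_mul_simple_of_isRightDescent {w : W} {i : B} (h : cs.IsRightDescent w i) :
    BruhatCov cs (w * s i) w := by
  simpa using bruhatCov_mul_simple cs (cs.isRightDescent_iff_not_isRightDescent_mul.mp h)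

variable {cs}

theorem BruhatLe.length_le {u v : W} (h : BruhatLe cs u v) : ℓ u ≤ ℓ v := by
  induction h with
  | refl => exact le_rfl
  | tail _ hcov ih => rw [hcov.1]; omega

theorem BruhatLe.inv {u v : W} (h : BruhatLe cs u v) : BruhatLe cs u⁻¹ v⁻¹ := by
  induction h with
  | refl => exact .refl
  | @tail c v _ hcov ih =>
    obtain ⟨hlen, t, ht, rfl⟩ := hcov
    refine ih.tail ⟨by rw [length_inv, length_inv, hlen], c⁻¹ * t * c, ?_, ?_⟩
    · simpa using ht.conj c⁻¹
    · rw [mul_inv_rev, ht.inv]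
      group

theorem BruhatLe.eq_one {u : W} (h : BruhatLe cs u 1) : u = 1 :=
  cs.length_eq_zero_iff.mp (by simpa using h.length_le)

theorem BruhatLe.exists_isReduced_sublist {v w : W} (h : BruhatLe cs v w) {ρ : List B}
    (hρ : cs.IsReduced ρ) (hw : π ρ = w) : ∃ τ, τ <+ ρ ∧ cs.IsReduced τ ∧ π τ = v := by
  induction h using Relation.ReflTransGen.head_induction_on with
  | refl => exact ⟨ρ, .refl ρ, hρ, hw⟩
  | @head u _ hcov _ ih =>
    obtain ⟨σ, hσρ, hσ, rfl⟩ := ih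
    obtain ⟨hlen, t, ht, hct⟩ := hcov
    have htσ : t * π σ = u := by rw [hct, ← mul_assoc, ht.mul_self, one_mul]
    obtain ⟨τ, hτσ, hτlen, hτ⟩ :=
      exists_sublist_of_isLeftInversion cs ⟨ht, by rw [htσ, hlen]; omega⟩
    refine ⟨τ, hτσ.trans hσρ, ?_, hτ.trans htσ⟩
    rw [CoxeterSystem.IsReduced, hτ, htσ]
    have := hσ.eq
    omega

end Bruhat

section Subword

/- Deodhar's argument: the subword property and the lifting property are proved together by
induction on the length. -/
def SubwordPropertyAt (n : ℕ) : Prop :=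
  ∀ ρ τ : List B, cs.IsReduced ρ → ρ.length = n → τ <+ ρ → cs.IsReduced τ →
    BruhatLe cs (π τ) (π ρ)

def LiftingPropertyAt (n : ℕ) : Prop :=
  ∀ (u v : W) (i : B), ℓ v = n → BruhatLe cs u v → ¬cs.IsLeftDescent u i →
    ¬cs.IsLeftDescent v i → BruhatLe cs (s i * u) (s i * v)

variable {cs}

theorem SubwordPropertyAt.simple_mul_le {n : ℕ} (hS : SubwordPropertyAt cs n) {u w : W} {i : B}
    (hw : ℓ w = n) (huw : BruhatLe cs u w) (hwi : cs.IsLeftDescent w i)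
    (hui : ¬cs.IsLeftDescent u i) : BruhatLe cs (s i * u) w := by
  obtain ⟨ρ, hρ, rfl⟩ := exists_isReduced_cons_of_isLeftDescent cs hwi
  obtain ⟨τ, hsub, hτ, rfl⟩ := huw.exists_isReduced_sublist hρ rfl
  have hτρ := sublist_of_sublist_cons_of_not_isLeftDescent cs hτ hsub hui
  have hiτ := (isReduced_cons_iff cs).mpr ⟨hτ, hui⟩
  simpa [wordProd_cons] using hS _ _ hρ (by rw [← hw, hρ.eq]) (hτρ.cons_cons i) hiτ

theorem SubwordPropertyAt.succ {n : ℕ} (hS : SubwordPropertyAt cs n)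
    (hL : LiftingPropertyAt cs n) : SubwordPropertyAt cs (n + 1) := by
  rintro (_ | ⟨i, ρ⟩) τ hρ hlen hsub hτ
  · simp at hlen
  obtain ⟨hρ', hρi⟩ := (isReduced_cons_iff cs).mp hρ
  replace hlen : ρ.length = n := by simpa using hlen
  rw [wordProd_cons]
  cases hsub with
  | cons _ h => exact (hS ρ τ hρ' hlen h hτ).tail (bruhatCov_simple_mul cs hρi)
  | cons_cons _ h =>
    rename_i τ
    obtain ⟨hτ', hτi⟩ := (isReduced_cons_iff cs).mp hτ
    rw [wordProd_cons]
    exact hL _ _ i (by rw [hρ'.eq, hlen]) (hS ρ τ hρ' hlen h hτ') hτi hρi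

theorem LiftingPropertyAt.succ {n : ℕ} (hS : SubwordPropertyAt cs n)
    (hL : LiftingPropertyAt cs n) : LiftingPropertyAt cs (n + 1) := by
  intro u v i hv huv hui hvi
  rcases huv.cases_tail with rfl | ⟨c, huc, hcv⟩
  · exact .refl
  obtain ⟨hlen, t, ht, rfl⟩ := hcv
  have hc : ℓ c = n := by omega
  have hsv := bruhatCov_simple_mul cs hvi
  by_cases hci : cs.IsLeftDescent c i
  · exact ((hS.simple_mul_le hc huc hci hui).tail ⟨hlen, t, ht, rfl⟩).tail hsv
  · refine (hL u c i hc huc hui hci).tail ⟨?_, s i * t * (s i)⁻¹, ht.conj _, by group⟩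
    rw [hsv.1, hlen, cs.not_isLeftDescent_iff.mp hci]

variable (cs) in
theorem subwordPropertyAt_and_liftingPropertyAt (n : ℕ) :
    SubwordPropertyAt cs n ∧ LiftingPropertyAt cs n := by
  induction n with
  | zero =>
    refine ⟨fun ρ τ _ hlen hsub _ => ?_, fun u v i hv huv _ _ => ?_⟩
    · obtain rfl := List.length_eq_zero_iff.mp hlen
      obtain rfl := List.sublist_nil.mp hsub
      exact .refl
    · obtain rfl := cs.length_eq_zero_iff.mp hv
      obtain rfl := huv.eq_one
      exact .refl
  | succ n ih => exact ⟨SubwordPropertyAt.succ ih.1 ih.2, LiftingPropertyAt.succ ih.1 ih.2⟩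

theorem bruhatLe_wordProd_of_sublist {ρ τ : List B} (hρ : cs.IsReduced ρ) (hsub : τ <+ ρ)
    (hτ : cs.IsReduced τ) : BruhatLe cs (π τ) (π ρ) :=
  (subwordPropertyAt_and_liftingPropertyAt cs ρ.length).1 ρ τ hρ rfl hsub hτ

end Subword

section AntiDemazure

theorem bruhatLt_mul_simple_iff {x : W} {i : B} :
    BruhatLt cs (x * s i) x ↔ cs.IsRightDescent x i := by
  refine ⟨fun h => lt_of_le_of_ne h.1.length_le (cs.length_mul_simple_ne x i), fun h => ?_⟩
  exact ⟨.single (bruhatCov_mul_simple_of_isRightDescent cs h),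
    fun he => cs.length_mul_simple_ne x i (congrArg _ he)⟩

theorem psiR_eq_ite (i : B) (x : W) :
    psiR cs i x = if cs.IsRightDescent x i then x * s i else x := by
  simp only [psiR, bruhatLt_mul_simple_iff]

theorem psiRWord_cons (i : B) (ω : List B) (x : W) :
    psiRWord cs (i :: ω) x = psiRWord cs ω (psiR cs i x) := rfl

variable {cs}

theorem BruhatLe.le_simple_mul_or {u w : W} {i : B} (h : BruhatLe cs u w)
    (hwi : cs.IsLeftDescent w i) : BruhatLe cs u (s i * w) ∨ BruhatLe cs (s i * u) (s i * w) := by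
  obtain ⟨ρ, hρ, rfl⟩ := exists_isReduced_cons_of_isLeftDescent cs hwi
  obtain ⟨τ, hsub, hτ, rfl⟩ := h.exists_isReduced_sublist hρ rfl
  rw [wordProd_cons, simple_mul_simple_cancel_left]
  cases hsub with
  | cons _ h => exact .inl (bruhatLe_wordProd_of_sublist (hρ.drop 1) h hτ)
  | cons_cons _ h =>
    rw [wordProd_cons, simple_mul_simple_cancel_left]
    exact .inr (bruhatLe_wordProd_of_sublist (hρ.drop 1) h (hτ.drop 1))

theorem BruhatLe.le_mul_simple_or {u w : W} {i : B} (h : BruhatLe cs u w)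
    (hwi : cs.IsRightDescent w i) :
    BruhatLe cs u (w * s i) ∨ BruhatLe cs (u * s i) (w * s i) := by
  have hinv (x : W) : s i * x⁻¹ = (x * s i)⁻¹ := by rw [mul_inv_rev, inv_simple]
  rcases h.inv.le_simple_mul_or (cs.isLeftDescent_inv_iff.mpr hwi) with h' | h'
  · rw [hinv] at h'
    simpa using Or.inl h'.inv
  · rw [hinv, hinv] at h'
    simpa using Or.inr h'.inv

theorem BruhatLe.psiR_le_mul_simple {z y : W} {i : B} (h : BruhatLe cs z y)
    (hyi : cs.IsRightDescent y i) : BruhatLe cs (psiR cs i z) (y * s i) := by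
  rw [psiR_eq_ite]
  split_ifs with hzi
  · rcases h.le_mul_simple_or hyi with h' | h'
    · exact .head (bruhatCov_mul_simple_of_isRightDescent cs hzi) h'
    · exact h'
  · rcases h.le_mul_simple_or hyi with h' | h'
    · exact h'
    · exact .head (bruhatCov_mul_simple cs hzi) h'

theorem psiRWord_eq_one_of_bruhatLe {ω : List B} (hω : cs.IsReduced ω) {y z : W}
    (hπ : π ω = y⁻¹) (h : BruhatLe cs z y) : psiRWord cs ω z = 1 := by
  induction ω generalizing y z with
  | nil =>
    obtain rfl : y = 1 := inv_eq_one.mp hπ.symm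
    exact h.eq_one
  | cons i ω ih =>
    have hπ' : π ω = (y * s i)⁻¹ := by
      rw [mul_inv_rev, inv_simple, ← hπ, wordProd_cons, simple_mul_simple_cancel_left]
    have hyi : cs.IsRightDescent y i := by
      rw [← cs.isLeftDescent_inv_iff, ← hπ]
      exact isLeftDescent_wordProd_cons cs hω
    exact ih (hω.drop 1) hπ' (h.psiR_le_mul_simple hyi)

end AntiDemazure

section WeakOrder

variable {cs}

theorem leftLe.mul_simple {z x : W} {i : B} (h : leftLe cs z x) (hz : cs.IsRightDescent z i) :
    cs.IsRightDescent x i ∧ leftLe cs (z * s i) (x * s i) := by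
  have hquot : x * s i * (z * s i)⁻¹ = x * z⁻¹ := by simp [mul_assoc]
  have hle := cs.length_mul_le (x * z⁻¹) (z * s i)
  rw [show x * z⁻¹ * (z * s i) = x * s i by group] at hle
  have hz' := cs.isRightDescent_iff.mp hz
  have hx : cs.IsRightDescent x i := by
    unfold leftLe at h
    unfold IsRightDescent
    omega
  refine ⟨hx, ?_⟩
  unfold leftLe at h ⊢
  have hx' := cs.isRightDescent_iff.mp hx
  rw [hquot]
  omega

theorem leftLe.le_mul_simple {z x : W} {i : B} (h : leftLe cs z x)
    (hz : ¬cs.IsRightDescent z i) (hx : cs.IsRightDescent x i) : leftLe cs z (x * s i) := by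
  -- Exchange in a reduced word `α ++ β` for `x`, with `π β = z`: the deleted letter cannot lie in
  -- `β`, because `i` is not a right descent of `z`.
  obtain ⟨α, hα, hαw⟩ := cs.exists_isReduced (x * z⁻¹)
  obtain ⟨β, hβ, rfl⟩ := cs.exists_isReduced z
  have hαβ : π (α ++ β) = x := by rw [wordProd_append, ← hαw, inv_mul_cancel_right]
  obtain ⟨τ, hsub, hlen, hτ⟩ := exists_sublist_of_isRightDescent cs (hαβ ▸ hx)
  obtain ⟨τ₁, τ₂, rfl, h₁, h₂⟩ := List.sublist_append_iff.mp hsub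
  rw [hαβ, wordProd_append] at hτ
  unfold leftLe at h ⊢
  rw [hαw, hα.eq, hβ.eq] at h
  have hx' := cs.isRightDescent_iff.mp hx
  simp only [List.length_append] at hlen
  have hτ₁ := cs.length_wordProd_le τ₁
  have hτ₂ := cs.length_wordProd_le τ₂
  by_cases hβτ : τ₂ = β
  · subst hβτ
    have hquot : x * s i * (π τ₂)⁻¹ = π τ₁ := by rw [← hτ, mul_inv_cancel_right]
    have hle := cs.length_mul_le (x * s i * (π τ₂)⁻¹) (π τ₂)
    rw [inv_mul_cancel_right, hquot] at hle
    rw [hquot]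
    omega
  · have hτβ : τ₂.length < β.length :=
      lt_of_le_of_ne h₂.length_le fun e => hβτ (h₂.eq_of_length e)
    obtain rfl : τ₁ = α := h₁.eq_of_length (by have := h₁.length_le; omega)
    have hτ₂β : π τ₂ = π β * s i := by
      have := congrArg ((π τ₁)⁻¹ * ·) hτ
      rw [← hαw] at this
      simpa [mul_assoc] using this
    have := cs.not_isRightDescent_iff.mp hz
    rw [hτ₂β] at hτ₂
    rw [hβ.eq] at this
    omega

end WeakOrder

section DescentWord

/-- The letters of `ω` at which `ψ^R_ω` actually moves `x`. -/
noncomputable def descentWord : List B → W → List B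
  | [], _ => []
  | i :: ω, x =>
    if cs.IsRightDescent x i then i :: descentWord ω (x * s i) else descentWord ω x

theorem descentWord_sublist (ω : List B) (x : W) : descentWord cs ω x <+ ω := by
  induction ω generalizing x with
  | nil => exact .slnil
  | cons i ω ih =>
    by_cases hx : cs.IsRightDescent x i
    · simpa [descentWord, hx] using ih _
    · simpa [descentWord, hx] using (ih x).cons i

theorem psiRWord_eq_mul_wordProd_descentWord (ω : List B) (x : W) :
    psiRWord cs ω x = x * π (descentWord cs ω x) := by
  induction ω generalizing x with
  | nil => simp [psiRWord, descentWord]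
  | cons i ω ih =>
    by_cases hx : cs.IsRightDescent x i <;>
      simp [psiRWord_cons, psiR_eq_ite, descentWord, hx, ih, wordProd_cons, mul_assoc]

theorem length_psiRWord_add_length_descentWord (ω : List B) (x : W) :
    ℓ (psiRWord cs ω x) + (descentWord cs ω x).length = ℓ x := by
  induction ω generalizing x with
  | nil => simp [psiRWord, descentWord]
  | cons i ω ih =>
    by_cases hx : cs.IsRightDescent x i
    · have := cs.isRightDescent_iff.mp hx
      simp only [psiRWord_cons, psiR_eq_ite, descentWord, hx, if_true, List.length_cons]
      have := ih (x * s i)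
      omega
    · simpa [psiRWord_cons, psiR_eq_ite, descentWord, hx] using ih x

theorem inv_psiRWord_mul (ω : List B) (x : W) :
    (psiRWord cs ω x)⁻¹ * x = π (descentWord cs ω x).reverse := by
  rw [psiRWord_eq_mul_wordProd_descentWord, wordProd_reverse]
  group

theorem isReduced_descentWord (ω : List B) (x : W) : cs.IsReduced (descentWord cs ω x) := by
  have hle := cs.length_mul_le (psiRWord cs ω x) ((psiRWord cs ω x)⁻¹ * x)
  rw [mul_inv_cancel_left, inv_psiRWord_mul, wordProd_reverse, length_inv] at hle
  have := length_psiRWord_add_length_descentWord cs ω x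
  have := cs.length_wordProd_le (descentWord cs ω x)
  unfold CoxeterSystem.IsReduced
  omega

theorem leftLe_inv_psiRWord_mul (ω : List B) (x : W) :
    leftLe cs ((psiRWord cs ω x)⁻¹ * x) x := by
  unfold leftLe
  rw [show x * ((psiRWord cs ω x)⁻¹ * x)⁻¹ = psiRWord cs ω x by group, inv_psiRWord_mul,
    (isReduced_descentWord cs ω x).reverse.eq, List.length_reverse,
    length_psiRWord_add_length_descentWord]

variable {cs} in
theorem leftLe.descentWord_sublist {z x : W} (h : leftLe cs z x) (ω : List B) :
    descentWord cs ω z <+ descentWord cs ω x := by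
  induction ω generalizing x z with
  | nil => exact .slnil
  | cons i ω ih =>
    by_cases hz : cs.IsRightDescent z i
    · obtain ⟨hx, h'⟩ := h.mul_simple hz
      simpa [descentWord, hz, hx] using (ih h').cons_cons i
    by_cases hx : cs.IsRightDescent x i
    · simpa [descentWord, hz, hx] using (ih (h.le_mul_simple hz hx)).cons i
    · simpa [descentWord, hz, hx] using ih h

end DescentWord

end

/-- `{z | z ≤_L x and z ≤ y}` has Bruhat-maximum `(ψ^R_{y⁻¹}(x))⁻¹ · x`, where
`ψ^R_{y⁻¹}` is computed along any reduced word `ω` for `y⁻¹`. -/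
theorem stmt17 (cs : CoxeterSystem M W) (x y : W) (ω : List B)
    (hred : cs.IsReduced ω) (hω : cs.wordProd ω = y⁻¹) :
    (leftLe cs ((psiRWord cs ω x)⁻¹ * x) x ∧ BruhatLe cs ((psiRWord cs ω x)⁻¹ * x) y) ∧
      ∀ z, leftLe cs z x → BruhatLe cs z y →
        BruhatLe cs z ((psiRWord cs ω x)⁻¹ * x) := by
  have hy : cs.wordProd ω.reverse = y := by rw [wordProd_reverse, hω, inv_inv]
  refine ⟨⟨leftLe_inv_psiRWord_mul cs ω x, ?_⟩, fun z hzx hzy => ?_⟩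
  · rw [inv_psiRWord_mul, ← hy]
    exact bruhatLe_wordProd_of_sublist hred.reverse (descentWord_sublist cs ω x).reverse
      (isReduced_descentWord cs ω x).reverse
  · have hz : z = cs.wordProd (descentWord cs ω z).reverse := by
      rw [← inv_psiRWord_mul, psiRWord_eq_one_of_bruhatLe hred hω hzy, inv_one, one_mul]
    rw [hz, inv_psiRWord_mul]
    exact bruhatLe_wordProd_of_sublist (isReduced_descentWord cs ω x).reverse
      (hzx.descentWord_sublist ω).reverse (isReduced_descentWord cs ω z).reverse
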